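/- For complex parameters with Re c > Re b > 0 and |z| < 1, the Gauss hypergeometric function has the Euler integral representation ₂F₁(a,b;c;z) = (Γ(c)/(Γ(b)·Γ(c−b))) · ∫₀¹ s^{b−1}·(1−s)^{c−b−1}·(1−sz)^{−a} ds. -/

import Mathlib

/-!
Expand `(1 - s z)^(-a)` by the binomial series `∑ (a)ₖ / k! (s z)ᵏ`, which converges absolutely
and uniformly for `s ∈ [0, 1]`, and integrate term by term against the Beta weight
`s^(b-1) (1-s)^(c-b-1)`. The `k`-th moment of the weight is
`B(b + k, c - b) = (b)ₖ / (c)ₖ · B(b, c - b)`, and the prefactor `Γ(c) / (Γ(b) Γ(c - b))` is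
exactly `1 / B(b, c - b)`.
-/

open Set

/-- The Gauss hypergeometric series `₂F₁(a, b; c; z)`. -/
noncomputable def hyp2F1 (a b c z : ℂ) : ℂ :=
  ∑' k : ℕ,
    ((ascPochhammer ℂ k).eval a * (ascPochhammer ℂ k).eval b
      / ((ascPochhammer ℂ k).eval c * (k.factorial : ℂ))) * z ^ k

open MeasureTheory Complex
open scoped Nat

theorem ascPochhammer_eval_div_factorial_eq_choose {K : Type*} [Field K] [CharZero K]
    (a : K) (n : ℕ) :
    (ascPochhammer K n).eval a / n ! = Ring.choose (a + n - 1) n := by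
  rw [← Ring.multichoose_eq, div_eq_iff (by exact_mod_cast n.factorial_ne_zero), mul_comm,
    ← nsmul_eq_mul, Ring.factorial_nsmul_multichoose_eq_ascPochhammer,
    Polynomial.ascPochhammer_smeval_cast, Polynomial.ascPochhammer_smeval_eq_eval]

namespace Complex

theorem hasFPowerSeriesOnBall_one_sub_cpow_neg (a : ℂ) :
    HasFPowerSeriesOnBall (fun x => (1 - x) ^ (-a))
      (.ofScalars ℂ fun n => (ascPochhammer ℂ n).eval a / n !) 0 1 := by
  simpa only [one_div, ← cpow_neg, ← ascPochhammer_eval_div_factorial_eq_choose] using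
    one_div_one_sub_cpow_hasFPowerSeriesOnBall_zero a

theorem hasSum_ascPochhammer_div_factorial_mul_pow (a : ℂ) {w : ℂ} (hw : ‖w‖ < 1) :
    HasSum (fun n => (ascPochhammer ℂ n).eval a / n ! * w ^ n) ((1 - w) ^ (-a)) := by
  simpa only [FormalMultilinearSeries.ofScalars_apply_eq, smul_eq_mul, zero_add] using
    (hasFPowerSeriesOnBall_one_sub_cpow_neg a).hasSum
      (by simpa [enorm_eq_nnnorm, ← NNReal.coe_lt_one] using hw)

theorem summable_norm_ascPochhammer_div_factorial_mul_pow (a : ℂ) {w : ℂ} (hw : ‖w‖ < 1) :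
    Summable fun n => ‖(ascPochhammer ℂ n).eval a / n ! * w ^ n‖ := by
  simpa only [FormalMultilinearSeries.ofScalars_apply_eq, smul_eq_mul] using
    FormalMultilinearSeries.summable_norm_apply _ <| Metric.eball_subset_eball
      (hasFPowerSeriesOnBall_one_sub_cpow_neg a).r_le
      (by simpa [enorm_eq_nnnorm, ← NNReal.coe_lt_one] using hw)

theorem betaIntegral_add_nat_eq_integral_mul_pow (u v : ℂ) (k : ℕ) :
    betaIntegral (u + k) v
      = ∫ x in (0 : ℝ)..1, (x : ℂ) ^ (u - 1) * (1 - (x : ℂ)) ^ (v - 1) * (x : ℂ) ^ k := by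
  refine intervalIntegral.integral_congr_ae (Filter.Eventually.of_forall fun x hx => ?_)
  have hx0 : (x : ℂ) ≠ 0 := ofReal_ne_zero.mpr (uIoc_of_le (zero_le_one' ℝ) ▸ hx).1.ne'
  rw [show u + k - 1 = u - 1 + k by ring, cpow_add _ _ hx0, cpow_natCast]
  ring

theorem Gamma_add_nat_of_re_pos {z : ℂ} (hz : 0 < z.re) (k : ℕ) :
    Gamma (z + k) = (ascPochhammer ℂ k).eval z * Gamma z := by
  rw [← Gamma_add_nat_div_Gamma_eq z, div_mul_cancel₀ _ (Gamma_ne_zero_of_re_pos hz)]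
  rintro m rfl
  simp only [neg_re, natCast_re, Left.neg_pos_iff] at hz
  exact (m.cast_nonneg.not_gt hz).elim

theorem betaIntegral_add_nat {u v : ℂ} (hu : 0 < u.re) (hv : 0 < v.re) (k : ℕ) :
    betaIntegral (u + k) v
      = (ascPochhammer ℂ k).eval u / (ascPochhammer ℂ k).eval (u + v) * betaIntegral u v := by
  have huk : 0 < (u + k).re := by simp only [add_re, natCast_re]; positivity
  have huv : 0 < (u + v).re := by rw [add_re]; positivity
  have hk := Gamma_mul_Gamma_eq_betaIntegral huk hv
  have h0 := Gamma_mul_Gamma_eq_betaIntegral hu hv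
  rw [add_right_comm, Gamma_add_nat_of_re_pos hu, Gamma_add_nat_of_re_pos huv] at hk
  obtain ⟨hP, hΓ⟩ := mul_ne_zero_iff.mp <| Gamma_add_nat_of_re_pos huv k ▸
    Gamma_ne_zero_of_re_pos (by simp only [add_re, natCast_re]; positivity)
  rw [div_mul_eq_mul_div, eq_div_iff hP]
  apply mul_left_cancel₀ hΓ
  linear_combination -hk + (ascPochhammer ℂ k).eval u * h0

end Complex

theorem hasSum_intervalIntegral_mul_pow {w : ℝ → ℂ} (hw : IntervalIntegrable w volume 0 1)
    {c : ℕ → ℂ} (hc : Summable fun k => ‖c k‖) {f : ℝ → ℂ}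
    (hf : ∀ s ∈ Ioc (0 : ℝ) 1, HasSum (fun k => c k * (s : ℂ) ^ k) (f s)) :
    HasSum (fun k => c k * ∫ s in (0 : ℝ)..1, w s * (s : ℂ) ^ k)
      (∫ s in (0 : ℝ)..1, w s * f s) := by
  have hIoc : uIoc (0 : ℝ) 1 = Ioc 0 1 := uIoc_of_le zero_le_one
  simp_rw [← intervalIntegral.integral_const_mul, mul_left_comm (c _)]
  refine intervalIntegral.hasSum_integral_of_dominated_convergence (fun k s => ‖c k‖ * ‖w s‖)
    (fun k => ?_) (fun k => Filter.Eventually.of_forall fun s hs => ?_)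
    (Filter.Eventually.of_forall fun s _ => hc.mul_right _) ?_
    (Filter.Eventually.of_forall fun s hs => (hf s (hIoc ▸ hs)).mul_left (w s))
  · exact hw.def'.aestronglyMeasurable.mul (by fun_prop)
  · rw [hIoc] at hs
    rw [norm_mul, norm_mul, norm_pow, norm_real, Real.norm_of_nonneg hs.1.le, mul_left_comm]
    exact mul_le_mul_of_nonneg_left
      (mul_le_of_le_one_right (norm_nonneg _) (pow_le_one₀ hs.1.le hs.2)) (norm_nonneg _)
  · simp_rw [tsum_mul_right]
    exact hw.norm.const_mul _

theorem euler_integral_representation_general (a b c z : ℂ)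
    (hb : 0 < b.re) (hcb : b.re < c.re) (hz : ‖z‖ < 1) :
    hyp2F1 a b c z
      = Complex.Gamma c / (Complex.Gamma b * Complex.Gamma (c - b))
          * ∫ s in (0 : ℝ)..1,
              (s : ℂ) ^ (b - 1) * ((1 : ℂ) - (s : ℂ)) ^ (c - b - 1)
                * ((1 : ℂ) - (s : ℂ) * z) ^ (-a) := by
  have hcb' : 0 < (c - b).re := by rw [sub_re]; linarith
  have hseries := hasSum_intervalIntegral_mul_pow (betaIntegral_convergent hb hcb')
    (summable_norm_ascPochhammer_div_factorial_mul_pow a hz)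
    (f := fun s => (1 - (s : ℂ) * z) ^ (-a)) fun s hs => by
      have hsz : ‖(s : ℂ) * z‖ < 1 := by
        rw [norm_mul, norm_real, Real.norm_of_nonneg hs.1.le]
        exact (mul_le_of_le_one_left (norm_nonneg z) hs.2).trans_lt hz
      convert hasSum_ascPochhammer_div_factorial_mul_pow a hsz using 2 with k
      ring
  have hB := Gamma_mul_Gamma_eq_betaIntegral hb hcb'
  rw [add_sub_cancel] at hB
  obtain ⟨hΓ, hβ⟩ : Gamma c ≠ 0 ∧ betaIntegral b (c - b) ≠ 0 := mul_ne_zero_iff.mp <|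
    hB ▸ mul_ne_zero (Gamma_ne_zero_of_re_pos hb) (Gamma_ne_zero_of_re_pos hcb')
  rw [hyp2F1, ← hseries.tsum_eq, ← tsum_mul_left]
  refine tsum_congr fun k => ?_
  rw [← betaIntegral_add_nat_eq_integral_mul_pow, betaIntegral_add_nat hb hcb', add_sub_cancel,
    hB]
  field_simp

theorem euler_integral_representation (a b c z : ℂ)
    (hc : ∀ m : ℕ, c ≠ -(m : ℂ)) (hb : 0 < b.re) (hcb : b.re < c.re) (hz : ‖z‖ < 1) :
    hyp2F1 a b c z
      = Complex.Gamma c / (Complex.Gamma b * Complex.Gamma (c - b))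
          * ∫ s in (0 : ℝ)..1,
              (s : ℂ) ^ (b - 1) * ((1 : ℂ) - (s : ℂ)) ^ (c - b - 1)
                * ((1 : ℂ) - (s : ℂ) * z) ^ (-a) :=
  euler_integral_representation_general a b c z hb hcb hz
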